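/- Let f_D be the Gaussian density with mean m and variance σ² on ℝ, ℓ(x,v) = (x−v)², α ≥ 1, and I(x) = ∫_ℝ ℓ_α(x,v) f_D(v) dv where ℓ_α(x,v) = α(x−v)² for x ≥ v and (x−v)² otherwise. Then I is twice differentiable and I''(x) = 2 + 2(α−1)·Φ((x−m)/σ) ≥ 2 for all x; in particular I is strongly convex and has a unique global minimum. -/

import Mathlib

/-!
Writing `ℓ_α(x, v) = (x - v)² + (α - 1) 𝟙[v ≤ x] (x - v)²`, the risk is
`I x = ∫ (x - v)² f + (α - 1) ∫_{v ≤ x} (x - v)² f` for the Gaussian density `f`. Expanding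
`(x - v)²` into moments of `f` and differentiating the moving endpoint by the fundamental theorem
of calculus (the boundary terms cancel because the integrand vanishes at `v = x`) gives
`I' x = 2 ∫ (x - v) f + 2 (α - 1) ∫_{v ≤ x} (x - v) f` and
`I'' x = 2 + 2 (α - 1) ∫_{v ≤ x} f = 2 + 2 (α - 1) Φ((x - m) / σ)`.
Since `I'' ≥ 2`, `I'` is strictly increasing and unbounded in both directions, so it has exactly
one zero, which is the unique strict global minimiser of `I`.
-/

open Real MeasureTheory

noncomputable def stdNormalCdf (t : ℝ) : ℝ :=
  ∫ s in Set.Iic t, (1 / Real.sqrt (2 * π)) * Real.exp (-(s ^ 2) / 2)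

open Set ProbabilityTheory NNReal

section Moments

variable {f : ℝ → ℝ} {μ : Measure ℝ}

lemma integral_sub_mul_eq (h0 : Integrable f μ) (h1 : Integrable (fun v => v * f v) μ) (x : ℝ) :
    ∫ v, (x - v) * f v ∂μ = x * ∫ v, f v ∂μ - ∫ v, v * f v ∂μ := by
  simp_rw [sub_mul]
  rw [integral_sub (h0.const_mul x) h1, integral_const_mul]

lemma integrable_sub_sq_mul (h0 : Integrable f μ) (h1 : Integrable (fun v => v * f v) μ)
    (h2 : Integrable (fun v => v ^ 2 * f v) μ) (x : ℝ) :
    Integrable (fun v => (x - v) ^ 2 * f v) μ :=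
  (((h0.const_mul (x ^ 2)).sub (h1.const_mul (2 * x))).add h2).congr
    (ae_of_all _ fun v => by simp only [Pi.add_apply, Pi.sub_apply]; ring)

lemma integral_sub_sq_mul_eq (h0 : Integrable f μ) (h1 : Integrable (fun v => v * f v) μ)
    (h2 : Integrable (fun v => v ^ 2 * f v) μ) (x : ℝ) :
    ∫ v, (x - v) ^ 2 * f v ∂μ
      = x ^ 2 * ∫ v, f v ∂μ - 2 * x * ∫ v, v * f v ∂μ + ∫ v, v ^ 2 * f v ∂μ := by
  have hexp : (fun v => (x - v) ^ 2 * f v)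
      = fun v => x ^ 2 * f v - 2 * x * (v * f v) + v ^ 2 * f v := by
    funext v; ring
  have h01 : Integrable (fun v => x ^ 2 * f v - 2 * x * (v * f v)) μ :=
    (h0.const_mul _).sub (h1.const_mul _)
  rw [hexp, integral_add h01 h2,
    integral_sub (h0.const_mul _) (h1.const_mul _), integral_const_mul, integral_const_mul]

lemma integral_ite_le_const_mul_eq {g : ℝ → ℝ} (hg : Integrable g μ) (α x : ℝ) :
    ∫ v, (if v ≤ x then α * g v else g v) ∂μ
      = ∫ v, g v ∂μ + (α - 1) * ∫ v in Iic x, g v ∂μ := by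
  have hsplit : (fun v => if v ≤ x then α * g v else g v)
      = fun v => g v + (α - 1) * (Iic x).indicator g v := by
    funext v
    by_cases hv : v ≤ x
    · rw [if_pos hv, indicator_of_mem (mem_Iic.mpr hv)]; ring
    · rw [if_neg hv, indicator_of_notMem (by simpa using hv)]; ring
  rw [hsplit, integral_add hg ((hg.indicator measurableSet_Iic).const_mul _), integral_const_mul,
    integral_indicator measurableSet_Iic]

end Moments

lemma hasDerivAt_setIntegral_Iic {h : ℝ → ℝ} (hc : Continuous h) (hi : Integrable h)
    (x : ℝ) : HasDerivAt (fun y => ∫ v in Iic y, h v) (h x) x := by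
  have hsplit : (fun y => ∫ v in Iic y, h v)
      = fun y => (∫ v in Iic 0, h v) + ∫ v in (0 : ℝ)..y, h v := by
    funext y
    rw [← intervalIntegral.integral_Iic_sub_Iic hi.integrableOn hi.integrableOn]
    ring
  rw [hsplit]
  exact (intervalIntegral.integral_hasDerivAt_right (hc.intervalIntegrable 0 x)
    hc.stronglyMeasurable.stronglyMeasurableAtFilter hc.continuousAt).const_add _

section Derivatives

variable {f : ℝ → ℝ}

lemma hasDerivAt_integral_sub_mul (h0 : Integrable f) (h1 : Integrable fun v => v * f v)
    (x : ℝ) : HasDerivAt (fun x => ∫ v, (x - v) * f v) (∫ v, f v) x := by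
  simp_rw [integral_sub_mul_eq h0 h1]
  simpa using ((hasDerivAt_id x).mul_const (∫ v, f v)).sub_const (∫ v, v * f v)

lemma hasDerivAt_integral_sub_sq_mul (h0 : Integrable f) (h1 : Integrable fun v => v * f v)
    (h2 : Integrable fun v => v ^ 2 * f v) (x : ℝ) :
    HasDerivAt (fun x => ∫ v, (x - v) ^ 2 * f v) (2 * ∫ v, (x - v) * f v) x := by
  simp_rw [integral_sub_sq_mul_eq h0 h1 h2, integral_sub_mul_eq h0 h1]
  refine ((((hasDerivAt_pow 2 x).mul_const (∫ v, f v)).sub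
    ((hasDerivAt_id x).const_mul 2 |>.mul_const (∫ v, v * f v))).add_const
      (∫ v, v ^ 2 * f v)).congr_deriv ?_
  norm_num
  ring

lemma hasDerivAt_setIntegral_Iic_sub_mul (hf : Continuous f) (h0 : Integrable f)
    (h1 : Integrable fun v => v * f v) (x : ℝ) :
    HasDerivAt (fun x => ∫ v in Iic x, (x - v) * f v) (∫ v in Iic x, f v) x := by
  simp_rw [integral_sub_mul_eq h0.integrableOn h1.integrableOn]
  refine (((hasDerivAt_id x).mul (hasDerivAt_setIntegral_Iic hf h0 x)).sub
    (hasDerivAt_setIntegral_Iic (continuous_id.mul hf) h1 x)).congr_deriv ?_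
  simp only [id, Pi.mul_apply]
  ring

lemma hasDerivAt_setIntegral_Iic_sub_sq_mul (hf : Continuous f) (h0 : Integrable f)
    (h1 : Integrable fun v => v * f v) (h2 : Integrable fun v => v ^ 2 * f v) (x : ℝ) :
    HasDerivAt (fun x => ∫ v in Iic x, (x - v) ^ 2 * f v)
      (2 * ∫ v in Iic x, (x - v) * f v) x := by
  simp_rw [integral_sub_sq_mul_eq h0.integrableOn h1.integrableOn h2.integrableOn,
    integral_sub_mul_eq h0.integrableOn h1.integrableOn]
  refine ((((hasDerivAt_pow 2 x).mul (hasDerivAt_setIntegral_Iic hf h0 x)).sub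
    (((hasDerivAt_id x).const_mul 2).mul
      (hasDerivAt_setIntegral_Iic (continuous_id.mul hf) h1 x))).add
    (hasDerivAt_setIntegral_Iic ((continuous_pow 2).mul hf) h2 x)).congr_deriv ?_
  simp only [id, Pi.mul_apply]
  ring

end Derivatives

lemma exists_eq_zero_of_le_deriv {g g' : ℝ → ℝ} {c : ℝ} (hc : 0 < c)
    (hg : ∀ x, HasDerivAt g (g' x) x) (hcg : ∀ x, c ≤ g' x) : ∃ x₀, g x₀ = 0 := by
  have hdiff : Differentiable ℝ g := fun x => (hg x).differentiableAt
  have hderiv : ∀ x, c ≤ deriv g x := fun x => (hg x).deriv ▸ hcg x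
  set r := |g 0| / c
  have hr : 0 ≤ r := by positivity
  have hcr : c * r = |g 0| := mul_div_cancel₀ _ hc.ne'
  have hleft : g (-r) ≤ 0 := by
    have := mul_sub_le_image_sub_of_le_deriv hdiff hderiv (show -r ≤ 0 by linarith)
    linarith [le_abs_self (g 0)]
  have hright : 0 ≤ g r := by
    have := mul_sub_le_image_sub_of_le_deriv hdiff hderiv hr
    linarith [neg_abs_le (g 0)]
  obtain ⟨x₀, -, hx₀⟩ := intermediate_value_Icc (by linarith) hdiff.continuous.continuousOn
    ⟨hleft, hright⟩
  exact ⟨x₀, hx₀⟩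

lemma lt_of_hasDerivAt_of_strictMono {f f' : ℝ → ℝ} (hf : ∀ x, HasDerivAt f (f' x) x)
    (hmono : StrictMono f') {x₀ : ℝ} (hx₀ : f' x₀ = 0) {x : ℝ} (hx : x ≠ x₀) :
    f x₀ < f x := by
  have hcont : Continuous f := continuous_iff_continuousAt.mpr fun x => (hf x).continuousAt
  rcases hx.lt_or_gt with hlt | hgt
  · refine strictAntiOn_of_deriv_neg (convex_Iic x₀) hcont.continuousOn (fun y hy => ?_)
      (mem_Iic.mpr hlt.le) self_mem_Iic hlt
    rw [interior_Iic] at hy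
    rw [(hf y).deriv, ← hx₀]
    exact hmono hy
  · refine strictMonoOn_of_deriv_pos (convex_Ici x₀) hcont.continuousOn (fun y hy => ?_)
      self_mem_Ici (mem_Ici.mpr hgt.le) hgt
    rw [interior_Ici] at hy
    rw [(hf y).deriv, ← hx₀]
    exact hmono hy

lemma existsUnique_forall_lt_of_le_deriv2 {f f' f'' : ℝ → ℝ} {c : ℝ} (hc : 0 < c)
    (hf : ∀ x, HasDerivAt f (f' x) x) (hf' : ∀ x, HasDerivAt f' (f'' x) x)
    (hcf : ∀ x, c ≤ f'' x) : ∃! x₀, ∀ x, x ≠ x₀ → f x₀ < f x := by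
  have hmono : StrictMono f' :=
    strictMono_of_deriv_pos fun x => (hf' x).deriv ▸ hc.trans_le (hcf x)
  obtain ⟨x₀, hx₀⟩ := exists_eq_zero_of_le_deriv hc hf' hcf
  refine ⟨x₀, fun x hx => lt_of_hasDerivAt_of_strictMono hf hmono hx₀ hx, fun y hy => ?_⟩
  by_contra hne
  exact (hy x₀ (Ne.symm hne)).not_gt (lt_of_hasDerivAt_of_strictMono hf hmono hx₀ hne)

lemma continuous_gaussianPDFReal (μ : ℝ) (v : ℝ≥0) : Continuous (gaussianPDFReal μ v) := by
  unfold gaussianPDFReal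
  fun_prop

lemma integrable_pow_mul_gaussianPDFReal (μ : ℝ) {v : ℝ≥0} (hv : v ≠ 0) (k : ℕ) :
    Integrable (fun x => x ^ k * gaussianPDFReal μ v x) := by
  have hk : Integrable (fun x : ℝ => x ^ k) (gaussianReal μ v) := by
    rcases k.eq_zero_or_pos with rfl | hk
    · simp
    refine ((memLp_id_gaussianReal (μ := μ) (v := v) k).integrable_norm_pow hk.ne').congr' ?_ ?_
    · fun_prop
    · simp
  rw [gaussianReal_of_var_ne_zero _ hv, integrable_withDensity_iff_integrable_smul'
    (measurable_gaussianPDF _ _) (ae_of_all _ fun _ => gaussianPDF_lt_top)] at hk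
  simpa [toReal_gaussianPDF, mul_comm] using hk

lemma gaussianReal_map_sub_div_sqrt (μ : ℝ) {v : ℝ≥0} (hv : v ≠ 0) :
    (gaussianReal μ v).map (fun x => (x - μ) / √v) = gaussianReal 0 1 := by
  have hcomp : (fun x => (x - μ) / √v) = (· / √v) ∘ (· - μ) := rfl
  rw [hcomp, ← Measure.map_map (by fun_prop) (by fun_prop), gaussianReal_map_sub_const,
    gaussianReal_map_div_const, sub_self, zero_div]
  congr 1
  ext
  simp [hv]

lemma setIntegral_Iic_gaussianPDFReal (μ : ℝ) {v : ℝ≥0} (hv : v ≠ 0) (x : ℝ) :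
    ∫ y in Iic x, gaussianPDFReal μ v y
      = ∫ s in Iic ((x - μ) / √v), gaussianPDFReal 0 1 s := by
  have hsqrt : 0 < √(v : ℝ) := Real.sqrt_pos.mpr (NNReal.coe_pos.mpr (pos_iff_ne_zero.mpr hv))
  have hpre : (fun y => (y - μ) / √v) ⁻¹' Iic ((x - μ) / √v) = Iic x := by
    ext y; simp [div_le_div_iff_of_pos_right hsqrt]
  have h := congrArg (· (Iic ((x - μ) / √v))) (gaussianReal_map_sub_div_sqrt μ hv)
  have hnonneg (μ' : ℝ) (v' : ℝ≥0) (a : ℝ) :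
      0 ≤ ∫ y in Iic a, gaussianPDFReal μ' v' y :=
    setIntegral_nonneg measurableSet_Iic fun _ _ ↦ gaussianPDFReal_nonneg _ _ _
  rwa [Measure.map_apply (by fun_prop) measurableSet_Iic, hpre,
    gaussianReal_apply_eq_integral _ hv, gaussianReal_apply_eq_integral _ one_ne_zero,
    ENNReal.ofReal_eq_ofReal_iff (hnonneg _ _ _) (hnonneg _ _ _)] at h

lemma stdNormalCdf_eq_setIntegral_gaussianPDFReal (t : ℝ) :
    stdNormalCdf t = ∫ s in Iic t, gaussianPDFReal 0 1 s := by
  simp [stdNormalCdf, gaussianPDFReal]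

theorem stmt1 (m σ : ℝ) (hσ : 0 < σ) (α : ℝ) (hα : 1 ≤ α)
    (fD : ℝ → ℝ)
    (hfD : ∀ v, fD v = (1 / Real.sqrt (2 * π * σ ^ 2)) * Real.exp (-(v - m) ^ 2 / (2 * σ ^ 2)))
    (ℓα : ℝ → ℝ → ℝ)
    (hℓ : ∀ x v, ℓα x v = if v ≤ x then α * (x - v) ^ 2 else (x - v) ^ 2)
    (I : ℝ → ℝ) (hI : ∀ x, I x = ∫ v, ℓα x v * fD v) :
    ∃ I' : ℝ → ℝ,
      (∀ x, HasDerivAt I (I' x) x) ∧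
      (∀ x, HasDerivAt I' (2 + 2 * (α - 1) * stdNormalCdf ((x - m) / σ)) x) ∧
      (∀ x, 2 ≤ 2 + 2 * (α - 1) * stdNormalCdf ((x - m) / σ)) ∧
      (∃! x₀ : ℝ, ∀ x, x ≠ x₀ → I x₀ < I x) := by
  set v : ℝ≥0 := ⟨σ ^ 2, sq_nonneg σ⟩
  have hvσ : (v : ℝ) = σ ^ 2 := rfl
  have hv : v ≠ 0 := by
    rw [ne_eq, ← NNReal.coe_eq_zero, hvσ]
    positivity
  obtain rfl : fD = gaussianPDFReal m v := funext fun y => by simp [hfD, gaussianPDFReal, hvσ]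
  have hf := continuous_gaussianPDFReal m v
  have h0 := integrable_gaussianPDFReal m v
  have h1 : Integrable fun y => y * gaussianPDFReal m v y := by
    simpa using integrable_pow_mul_gaussianPDFReal m hv 1
  have h2 := integrable_pow_mul_gaussianPDFReal m hv 2
  have hIeq : I = fun x => (∫ y, (x - y) ^ 2 * gaussianPDFReal m v y)
      + (α - 1) * ∫ y in Iic x, (x - y) ^ 2 * gaussianPDFReal m v y := by
    funext x
    simp_rw [hI, hℓ, ite_mul, mul_assoc]
    exact integral_ite_le_const_mul_eq (integrable_sub_sq_mul h0 h1 h2 x) α x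
  have hcdf (x : ℝ) : ∫ y in Iic x, gaussianPDFReal m v y = stdNormalCdf ((x - m) / σ) := by
    rw [setIntegral_Iic_gaussianPDFReal m hv, stdNormalCdf_eq_setIntegral_gaussianPDFReal, hvσ,
      Real.sqrt_sq hσ.le]
  have hΦ : ∀ x, 0 ≤ stdNormalCdf ((x - m) / σ) := fun x =>
    hcdf x ▸ setIntegral_nonneg measurableSet_Iic fun y _ => gaussianPDFReal_nonneg m v y
  set I' : ℝ → ℝ := fun x => 2 * (∫ y, (x - y) * gaussianPDFReal m v y)
    + (α - 1) * (2 * ∫ y in Iic x, (x - y) * gaussianPDFReal m v y)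
  have hI_deriv : ∀ x, HasDerivAt I (I' x) x := fun x =>
    hIeq ▸ (hasDerivAt_integral_sub_sq_mul h0 h1 h2 x).add
      ((hasDerivAt_setIntegral_Iic_sub_sq_mul hf h0 h1 h2 x).const_mul (α - 1))
  have hI'_deriv (x : ℝ) : HasDerivAt I' (2 + 2 * (α - 1) * stdNormalCdf ((x - m) / σ)) x := by
    refine (((hasDerivAt_integral_sub_mul h0 h1 x).const_mul 2).add
      (((hasDerivAt_setIntegral_Iic_sub_mul hf h0 h1 x).const_mul 2).const_mul
        (α - 1))).congr_deriv ?_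
    rw [integral_gaussianPDFReal_eq_one m hv, hcdf]
    ring
  have hI''_ge (x : ℝ) : 2 ≤ 2 + 2 * (α - 1) * stdNormalCdf ((x - m) / σ) :=
    le_add_of_nonneg_right (mul_nonneg (by linarith) (hΦ x))
  exact ⟨I', hI_deriv, hI'_deriv, hI''_ge,
    existsUnique_forall_lt_of_le_deriv2 two_pos hI_deriv hI'_deriv hI''_ge⟩
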